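/- arXiv:math/0209300 — 3 statements merged into one kernel-verified Lean document; each statement's English description precedes it below -/
import Mathlib

section
/- Let R be a commutative ring, f_1,...,f_n, f_0 ∈ R, and let A = R[T_1,...,T_n]/(f_1T_1+...+f_nT_n+f_0) be the forcing algebra. Then for each i with 1 ≤ i ≤ n, the localization A_{f_i} is isomorphic as an R_{f_i}-algebra to the polynomial ring R_{f_i}[T_1,...,T_{i-1},T_{i+1},...,T_n]. -/
open MvPolynomial

set_option maxHeartbeats 1000000
set_option synthInstance.maxHeartbeats 400000
open MvPolynomial

noncomputable section Aux
variable {R : Type*} [CommRing R] {n : ℕ} (f : Fin n → R) (f0 : R) (i : Fin n)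

local notation "A" => MvPolynomial (Fin n) R ⧸ Ideal.span {(∑ j, C (f j) * X j) + C f0}

lemma sum_split {M : Type*} [AddCommMonoid M] (g : Fin n → M) :
    ∑ x : Fin n, g x = g i + ∑ k : {j : Fin n // j ≠ i}, g k.1 := by
  rw [← Finset.sum_subtype (p := fun j => j ≠ i) (Finset.univ.erase i)
    (fun x => by simp [Finset.mem_erase]) g]
  exact (Finset.add_sum_erase _ g (Finset.mem_univ i)).symm

def myE : MvPolynomial {j : Fin n // j ≠ i} (Localization.Away (f i)) :=
  (∑ k : {j : Fin n // j ≠ i}, C (algebraMap R (Localization.Away (f i)) (f k.1)) * X k) + C (algebraMap R (Localization.Away (f i)) f0)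

def myv : Fin n → MvPolynomial {j : Fin n // j ≠ i} (Localization.Away (f i)) :=
  fun j => if h : j = i then -C (IsLocalization.Away.invSelf (f i)) * myE f f0 i else X ⟨j, h⟩

lemma algebraMap_P (r : R) : algebraMap R (MvPolynomial {j : Fin n // j ≠ i} (Localization.Away (f i))) r = C (algebraMap R (Localization.Away (f i)) r) := by
  rw [IsScalarTower.algebraMap_apply R (Localization.Away (f i)), MvPolynomial.algebraMap_eq]

lemma phi0_rel : aeval (myv f f0 i) ((∑ j, C (f j) * X j) + C f0) = 0 := by
  have h1 : ∀ j : Fin n, aeval (myv f f0 i) (C (f j) * X j) = C (algebraMap R (Localization.Away (f i)) (f j)) * myv f f0 i j := by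
    intro j; simp [algebraMap_P]
  rw [map_add, map_sum]
  simp_rw [h1, aeval_C, algebraMap_P]
  rw [sum_split i]
  have h2 : ∀ k : {j : Fin n // j ≠ i}, myv f f0 i k.1 = X k := by
    intro k; simp [myv, k.2]
  simp_rw [h2]
  have h3 : myv f f0 i i = -C (IsLocalization.Away.invSelf (f i)) * myE f f0 i := by simp [myv]
  rw [h3, myE]
  have hC : C (algebraMap R (Localization.Away (f i)) (f i)) * C (IsLocalization.Away.invSelf (f i))
      = (1 : MvPolynomial {j : Fin n // j ≠ i} (Localization.Away (f i))) := by
    rw [← map_mul, IsLocalization.Away.mul_invSelf, map_one]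
  linear_combination (-(((∑ k : {j : Fin n // j ≠ i}, C (algebraMap R (Localization.Away (f i)) (f k.1)) * X k)
    + C (algebraMap R (Localization.Away (f i)) f0)))) * hC

def myphi : (MvPolynomial (Fin n) R ⧸ Ideal.span {(∑ j, C (f j) * X j) + C f0}) →ₐ[R]
    MvPolynomial {j : Fin n // j ≠ i} (Localization.Away (f i)) :=
  Ideal.Quotient.liftₐ _ (aeval (myv f f0 i)) (by
    intro a ha
    refine Submodule.span_induction ?_ ?_ ?_ ?_ ha
    · rintro p rfl
      exact phi0_rel f f0 i
    · simp
    · intro p q _ _ hp hq; simp [hp, hq]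
    · intro r x _ hx; simp [hx])

lemma myphi_mk (p : MvPolynomial (Fin n) R) :
    myphi f f0 i (Ideal.Quotient.mk _ p) = aeval (myv f f0 i) p := rfl

lemma myphi_algebraMap (r : R) :
    myphi f f0 i (algebraMap R _ r) = C (algebraMap R (Localization.Away (f i)) r) := by
  rw [← algebraMap_P f i r, AlgHom.commutes]

lemma myphi_unit : IsUnit ((myphi f f0 i : A →+* MvPolynomial {j : Fin n // j ≠ i}
    (Localization.Away (f i))) (algebraMap R A (f i))) := by
  show IsUnit (myphi f f0 i (algebraMap R A (f i)))
  rw [myphi_algebraMap]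
  exact (show IsUnit (algebraMap R (Localization.Away (f i)) (f i)) from
    IsLocalization.Away.algebraMap_isUnit _).map C

variable (L : Type*) [CommRing L]
  [Algebra (MvPolynomial (Fin n) R ⧸ Ideal.span {(∑ j, C (f j) * X j) + C f0}) L]
  [IsLocalization.Away
    (algebraMap R (MvPolynomial (Fin n) R ⧸ Ideal.span {(∑ j, C (f j) * X j) + C f0}) (f i)) L]

def myg : Localization.Away (f i) →+* L :=
  IsLocalization.map L (algebraMap R A)
    (Submonoid.powers_le.mpr (Submonoid.mem_comap.mpr
      (Submonoid.mem_powers (algebraMap R A (f i)))))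

lemma myg_algebraMap (r : R) :
    myg f f0 i L (algebraMap R (Localization.Away (f i)) r)
      = algebraMap A L (algebraMap R A r) :=
  IsLocalization.map_eq _ _

lemma myg_algebraMap' (r : R) :
    myg f f0 i L (algebraMap R (Localization.Away (f i)) r)
      = algebraMap A L (Ideal.Quotient.mk _ (C r)) :=
  myg_algebraMap f f0 i L r

def mypsi : MvPolynomial {j : Fin n // j ≠ i} (Localization.Away (f i)) →+* L :=
  eval₂Hom (myg f f0 i L)
    (fun k => algebraMap A L (Ideal.Quotient.mk _ (X k.1)))

def myphi' : L →+* MvPolynomial {j : Fin n // j ≠ i} (Localization.Away (f i)) :=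
  IsLocalization.Away.lift (g := (myphi f f0 i).toRingHom) (algebraMap R A (f i))
    (myphi_unit f f0 i)

lemma myphi'_algebraMap (x : MvPolynomial (Fin n) R ⧸ Ideal.span {(∑ j, C (f j) * X j) + C f0}) :
    myphi' f f0 i L (algebraMap A L x) = myphi f f0 i x :=
  IsLocalization.Away.lift_eq _ _ _

lemma mypsi_v (j : Fin n) :
    mypsi f f0 i L (myv f f0 i j)
      = algebraMap A L (Ideal.Quotient.mk _ (X j)) := by
  by_cases h : j = i
  · rw [h]
    have hmkrel : (Ideal.Quotient.mk (Ideal.span {(∑ j, C (f j) * X j) + C f0})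
        ((∑ j, C (f j) * X j) + C f0) : A) = 0 := by
      rw [Ideal.Quotient.eq_zero_iff_mem]; exact Ideal.subset_span rfl
    have hE : mypsi f f0 i L (myE f f0 i)
        = algebraMap A L (Ideal.Quotient.mk _
            ((∑ k : {j : Fin n // j ≠ i}, C (f k.1) * X k.1) + C f0)) := by
      rw [myE]
      simp only [map_add, map_sum, map_mul, mypsi, coe_eval₂Hom, eval₂_add, eval₂_sum,
        eval₂_mul, eval₂_C, eval₂_X, myg_algebraMap']
    have hadd : ((∑ k : {j : Fin n // j ≠ i}, C (f k.1) * X k.1) + C f0 : MvPolynomial (Fin n) R)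
        = ((∑ j, C (f j) * X j) + C f0) - C (f i) * X i := by
      rw [sum_split i (fun j => C (f j) * X j)]; ring
    have hq : (Ideal.Quotient.mk (Ideal.span {(∑ j, C (f j) * X j) + C f0})
        ((∑ k : {j : Fin n // j ≠ i}, C (f k.1) * X k.1) + C f0) : A)
        = - Ideal.Quotient.mk _ (C (f i) * X i) := by
      rw [hadd, map_sub, hmkrel]; ring
    have hv : myv f f0 i i = -C (IsLocalization.Away.invSelf (f i)) * myE f f0 i := by
      simp [myv]
    rw [hv, map_mul, hE, hq]
    simp only [map_neg, map_mul, mypsi, coe_eval₂Hom, eval₂_C]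
    have hinv : myg f f0 i L (IsLocalization.Away.invSelf (f i))
        * algebraMap A L (Ideal.Quotient.mk _ (C (f i))) = 1 := by
      rw [← myg_algebraMap' f f0 i L (f i), ← map_mul, mul_comm,
        IsLocalization.Away.mul_invSelf, map_one]
    linear_combination (algebraMap A L (Ideal.Quotient.mk
      (Ideal.span {(∑ j, C (f j) * X j) + C f0}) (X i))) * hinv
  · simp [myv, h, mypsi]

lemma comp2 : (mypsi f f0 i L).comp (myphi' f f0 i L) = RingHom.id L := by
  have h : (((mypsi f f0 i L).comp (myphi' f f0 i L)).comp
        (algebraMap A L)) = (RingHom.id L).comp (algebraMap A L) := by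
    rw [← RingHom.cancel_right (Ideal.Quotient.mk_surjective
      (I := Ideal.span {(∑ j, C (f j) * X j) + C f0}))]
    apply MvPolynomial.ringHom_ext
    · intro r
      simp only [RingHom.comp_apply, RingHom.id_apply]
      rw [myphi'_algebraMap, myphi_mk, aeval_C, algebraMap_P]
      simp only [mypsi, coe_eval₂Hom, eval₂_C]
      rw [myg_algebraMap']
    · intro j
      simp only [RingHom.comp_apply, RingHom.id_apply]
      rw [myphi'_algebraMap, myphi_mk, aeval_X, mypsi_v]
  exact IsLocalization.ringHom_ext (Submonoid.powers (algebraMap R A (f i))) h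

lemma comp1 : (myphi' f f0 i L).comp (mypsi f f0 i L)
    = RingHom.id (MvPolynomial {j : Fin n // j ≠ i} (Localization.Away (f i))) := by
  apply MvPolynomial.ringHom_ext
  · intro s
    simp only [RingHom.comp_apply, RingHom.id_apply]
    have : ((myphi' f f0 i L).comp ((mypsi f f0 i L).comp
        (C : Localization.Away (f i) →+* MvPolynomial {j : Fin n // j ≠ i}
          (Localization.Away (f i)))))
        = (C : Localization.Away (f i) →+* MvPolynomial {j : Fin n // j ≠ i}
          (Localization.Away (f i))) := by
      apply IsLocalization.ringHom_ext (Submonoid.powers (f i))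
      ext r
      simp only [RingHom.comp_apply]
      have h1 : mypsi f f0 i L (C (algebraMap R (Localization.Away (f i)) r))
          = algebraMap A L (Ideal.Quotient.mk _ (C r)) := by
        simp only [mypsi, coe_eval₂Hom, eval₂_C]; exact myg_algebraMap' f f0 i L r
      rw [h1, myphi'_algebraMap, myphi_mk, aeval_C, algebraMap_P]
    have := RingHom.congr_fun this s
    simpa using this
  · intro k
    simp only [RingHom.comp_apply, RingHom.id_apply]
    have h1 : mypsi f f0 i L (X k) = algebraMap A L (Ideal.Quotient.mk _ (X k.1)) := by
      simp [mypsi]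
    rw [h1, myphi'_algebraMap, myphi_mk, aeval_X]
    simp [myv, k.2]

variable [Algebra R L] [IsScalarTower R (MvPolynomial (Fin n) R ⧸
  Ideal.span {(∑ j, C (f j) * X j) + C f0}) L]

def myAlgEquiv : L ≃ₐ[R] MvPolynomial {j : Fin n // j ≠ i} (Localization.Away (f i)) :=
  AlgEquiv.ofAlgHom
    { toRingHom := myphi' f f0 i L
      commutes' := fun r => by
        rw [IsScalarTower.algebraMap_apply R A L]
        show myphi' f f0 i L (algebraMap A L (algebraMap R A r)) = _
        rw [myphi'_algebraMap, AlgHom.commutes] }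
    { toRingHom := mypsi f f0 i L
      commutes' := fun r => by
        show mypsi f f0 i L (algebraMap R _ r) = algebraMap R L r
        rw [algebraMap_P]
        have h1 : mypsi f f0 i L (C (algebraMap R (Localization.Away (f i)) r))
            = algebraMap A L (Ideal.Quotient.mk _ (C r)) := by
          simp only [mypsi, coe_eval₂Hom, eval₂_C]; exact myg_algebraMap' f f0 i L r
        rw [h1]
        conv_rhs => rw [IsScalarTower.algebraMap_apply R A L]
        rfl }
    (AlgHom.ext fun x => RingHom.congr_fun (comp1 f f0 i L) x)
    (AlgHom.ext fun x => RingHom.congr_fun (comp2 f f0 i L) x)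

end Aux



/-- For the forcing algebra `A = R[T_1,...,T_n]/(f_1T_1+...+f_nT_n+f_0)` and each `i`,
the localization `A_{f_i}` is isomorphic as an `R`-algebra (hence as an `R_{f_i}`-algebra)
to the polynomial ring `R_{f_i}[T_j : j ≠ i]`. -/
theorem stmt0 (R : Type*) [CommRing R] (n : ℕ) (f : Fin n → R) (f0 : R)
    (i : Fin n) :
    Nonempty
      (Localization.Away
          (algebraMap R
            (MvPolynomial (Fin n) R ⧸
              Ideal.span {(∑ j, C (f j) * X j) + C f0}) (f i)) ≃ₐ[R]
        MvPolynomial {j : Fin n // j ≠ i} (Localization.Away (f i))) := by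
  exact ⟨myAlgEquiv f f0 i (Localization.Away
    (algebraMap R (MvPolynomial (Fin n) R ⧸
      Ideal.span {(∑ j, C (f j) * X j) + C f0}) (f i)))⟩
end

section
/- Let R be a normal standard graded K-algebra and f_1,...,f_n ∈ R homogeneous of degrees d_i such that every (n−1)-element subfamily is R_+-primary. Let (g_1,...,g_n) be a homogeneous relation for (f_1,...,f_n) of total degree k (i.e., each g_i is homogeneous of degree k − d_i and Σ f_i g_i = 0) with (g_1,...,g_n) an R_+-primary ideal. Then the global section (g_1,...,g_n) of the relation sheaf R(k) on Y = Proj R generates a subsheaf O_Y ⊆ R(k) whose quotient R(k)/O_Y is locally free. -/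
set_option maxHeartbeats 1600000 in
/-- Let `R` be a normal standard graded `K`-algebra, `f_1,...,f_n` homogeneous of degrees
`d_i` such that every `(n−1)`-element subfamily is `R_+`-primary, and let
`(g_1,...,g_n)` be a homogeneous relation of total degree `k` (each `g_i` homogeneous of
degree `k − d_i`, `∑ f_i g_i = 0`) generating an `R_+`-primary ideal.  The global section
`(g_1,...,g_n)` of the relation sheaf `𝓡(k)` on `Y = Proj R` generates a subsheaf
`O_Y ⊆ 𝓡(k)` whose quotient is locally free: at every relevant prime `P`, the quotient of
the localized relation module by the span of `(g_1,...,g_n)` is free. -/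
theorem stmt15 (K R : Type*) [Field K] [CommRing R] [Algebra K R] [IsDomain R]
    [IsIntegrallyClosed R]
    (𝒜 : ℕ → Submodule K R) [GradedAlgebra 𝒜]
    (n : ℕ) (f g : Fin n → R) (d : Fin n → ℕ) (k : ℕ) (hdk : ∀ i, d i ≤ k)
    (hf : ∀ i, f i ∈ 𝒜 (d i)) (hg : ∀ i, g i ∈ 𝒜 (k - d i))
    (hrel : ∑ i, f i * g i = 0)
    -- every subfamily of the `f_i` omitting one element is `R_+`-primary:
    (hsubprim : ∀ (j : Fin n) (P : Ideal R), P.IsPrime → (∀ i, i ≠ j → f i ∈ P) →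
      ∀ m : ℕ, 0 < m → ∀ r ∈ 𝒜 m, r ∈ P)
    -- the relation `(g_1,...,g_n)` is `R_+`-primary:
    (hgprim : ∀ P : Ideal R, P.IsPrime → (∀ i, g i ∈ P) →
      ∀ m : ℕ, 0 < m → ∀ r ∈ 𝒜 m, r ∈ P)
    (P : Ideal R) [P.IsPrime]
    (hPrel : ∃ m : ℕ, 0 < m ∧ ∃ r ∈ 𝒜 m, r ∉ P)
    (ℓ : (Fin n → Localization.AtPrime P) →ₗ[Localization.AtPrime P] Localization.AtPrime P)
    (hℓ : ∀ h : Fin n → Localization.AtPrime P,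
      ℓ h = ∑ i, algebraMap R (Localization.AtPrime P) (f i) * h i) :
    ∃ N : Submodule (Localization.AtPrime P) ↥(LinearMap.ker ℓ),
      (∀ h : ↥(LinearMap.ker ℓ), h ∈ N ↔ ∃ c : Localization.AtPrime P,
        ∀ i, (h : Fin n → Localization.AtPrime P) i =
          c * algebraMap R (Localization.AtPrime P) (g i)) ∧
      Module.Free (Localization.AtPrime P) (↥(LinearMap.ker ℓ) ⧸ N) := by
  classical
  set A := Localization.AtPrime P with hA
  set φ := algebraMap R A with hφ
  obtain ⟨m, hm, r, hr, hrP⟩ := hPrel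
  have hi : ∃ i, g i ∉ P := by
    by_contra hcon
    push_neg at hcon
    exact hrP (hgprim P ‹P.IsPrime› hcon m hm r hr)
  obtain ⟨i₀, hi₀⟩ := hi
  have hj : ∃ j, j ≠ i₀ ∧ f j ∉ P := by
    by_contra hcon
    push_neg at hcon
    exact hrP (hsubprim i₀ P ‹P.IsPrime› (fun i hne => hcon i hne) m hm r hr)
  obtain ⟨j₀, hj₀ne, hj₀⟩ := hj
  have hgu : IsUnit (φ (g i₀)) :=
    (IsLocalization.AtPrime.isUnit_to_map_iff A P (g i₀)).mpr hi₀
  have hfu : IsUnit (φ (f j₀)) :=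
    (IsLocalization.AtPrime.isUnit_to_map_iff A P (f j₀)).mpr hj₀
  set c₀ : A := ↑hgu.unit⁻¹ with hc₀
  have hc₀g : c₀ * φ (g i₀) = 1 := hgu.val_inv_mul
  -- the sum of f·g vanishes in A
  have hrelA : ∑ i, φ (f i) * φ (g i) = 0 := by
    have := congrArg φ hrel
    rw [map_sum] at this
    simpa [map_mul] using this
  -- define ψ
  set ψ : ↥(LinearMap.ker ℓ) →ₗ[A] ({i : Fin n // i ≠ i₀ ∧ i ≠ j₀} → A) :=
    { toFun := fun h t => (h : Fin n → A) t.1 - (h : Fin n → A) i₀ * c₀ * φ (g t.1)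
      map_add' := by
        intro a b
        funext t
        simp only [Submodule.coe_add, Pi.add_apply]
        ring
      map_smul' := by
        intro c a
        funext t
        simp only [Submodule.coe_smul, Pi.smul_apply, smul_eq_mul, RingHom.id_apply]
        ring } with hψ
  refine ⟨LinearMap.ker ψ, ?_, ?_⟩
  · intro h
    constructor
    · intro hk
      have hψ0 : ∀ t : {i : Fin n // i ≠ i₀ ∧ i ≠ j₀},
          (h : Fin n → A) t.1 = (h : Fin n → A) i₀ * c₀ * φ (g t.1) := by
        intro t
        have := congrFun (LinearMap.mem_ker.mp hk) t
        simpa [hψ, sub_eq_zero] using this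
      set c : A := (h : Fin n → A) i₀ * c₀ with hc
      have hci₀ : (h : Fin n → A) i₀ = c * φ (g i₀) := by
        rw [hc, mul_assoc, hc₀g, mul_one]
      -- the relation for h
      have hhker : ∑ i, φ (f i) * (h : Fin n → A) i = 0 := by
        have := h.2
        rw [LinearMap.mem_ker, hℓ] at this
        exact this
      -- sum of f_i * (h i - c * g i) is zero
      have hsum0 : ∑ i, φ (f i) * ((h : Fin n → A) i - c * φ (g i)) = 0 := by
        have : ∑ i, φ (f i) * ((h : Fin n → A) i - c * φ (g i))
            = (∑ i, φ (f i) * (h : Fin n → A) i) - c * ∑ i, φ (f i) * φ (g i) := by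
          rw [Finset.mul_sum, ← Finset.sum_sub_distrib]
          congr 1
          funext i
          ring
        rw [this, hhker, hrelA, mul_zero, sub_zero]
      have hsingle : ∑ i, φ (f i) * ((h : Fin n → A) i - c * φ (g i))
          = φ (f j₀) * ((h : Fin n → A) j₀ - c * φ (g j₀)) := by
        apply Finset.sum_eq_single
        · intro i _ hne
          by_cases hii : i = i₀
          · subst hii
            rw [← hci₀, sub_self, mul_zero]
          · rw [hψ0 ⟨i, hii, hne⟩, sub_self, mul_zero]
        · intro habs
          exact absurd (Finset.mem_univ j₀) habs
      have hj₀eq : (h : Fin n → A) j₀ = c * φ (g j₀) := by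
        have := hsingle ▸ hsum0
        have h0 := (hfu.mul_right_eq_zero).mp this
        exact sub_eq_zero.mp h0
      refine ⟨c, fun i => ?_⟩
      by_cases hii : i = i₀
      · subst hii; exact hci₀
      · by_cases hij : i = j₀
        · subst hij; exact hj₀eq
        · rw [hψ0 ⟨i, hii, hij⟩, hc]
    · rintro ⟨c, hcc⟩
      rw [LinearMap.mem_ker]
      funext t
      have h1 : (h : Fin n → A) t.1 = c * φ (g t.1) := hcc t.1
      have h2 : (h : Fin n → A) i₀ = c * φ (g i₀) := hcc i₀
      show (h : Fin n → A) t.1 - (h : Fin n → A) i₀ * c₀ * φ (g t.1) = 0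
      rw [h1, h2]
      have : c * φ (g i₀) * c₀ = c := by
        rw [mul_assoc, mul_comm (φ (g i₀)) c₀, hc₀g, mul_one]
      rw [this, sub_self]
  · -- surjectivity of ψ, then quotient is free
    have hsurj : Function.Surjective ψ := by
      intro v
      set w : Fin n → A := fun i =>
        if h1 : i = i₀ then 0 else if h2 : i = j₀ then 0 else v ⟨i, h1, h2⟩ with hw
      set S : A := ∑ i ∈ Finset.univ.erase j₀, φ (f i) * w i with hS
      set hv : Fin n → A := Function.update w j₀ (-(↑hfu.unit⁻¹ : A) * S) with hhv
      have hvi₀ : hv i₀ = 0 := by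
        rw [hhv, Function.update_of_ne (Ne.symm (Ne.symm hj₀ne)).symm, hw]
        simp
      have hvmem : hv ∈ LinearMap.ker ℓ := by
        rw [LinearMap.mem_ker, hℓ]
        have hsplit : ∑ i, φ (f i) * hv i
            = φ (f j₀) * hv j₀ + ∑ i ∈ Finset.univ.erase j₀, φ (f i) * hv i := by
          rw [Finset.add_sum_erase _ (fun i => φ (f i) * hv i) (Finset.mem_univ j₀)]
        have herase : ∑ i ∈ Finset.univ.erase j₀, φ (f i) * hv i = S := by
          apply Finset.sum_congr rfl
          intro i hi
          have hine : i ≠ j₀ := (Finset.mem_erase.mp hi).1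
          rw [hhv, Function.update_of_ne hine]
        have hvj₀ : hv j₀ = -(↑hfu.unit⁻¹ : A) * S := by
          rw [hhv, Function.update_self]
        rw [hsplit, herase, hvj₀]
        have : φ (f j₀) * (-(↑hfu.unit⁻¹ : A) * S) = -S := by
          rw [← mul_assoc, mul_comm (φ (f j₀)), neg_mul, neg_mul, mul_comm _ (φ (f j₀)),
            hfu.mul_val_inv, one_mul]
        rw [this, neg_add_cancel]
      refine ⟨⟨hv, hvmem⟩, ?_⟩
      funext t
      show hv t.1 - hv i₀ * c₀ * φ (g t.1) = v t
      rw [hvi₀, zero_mul, zero_mul, sub_zero, hhv, Function.update_of_ne t.2.2, hw]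
      simp only [dif_neg t.2.1, dif_neg t.2.2]
    have heq := ψ.quotKerEquivOfSurjective hsurj
    exact Module.Free.of_equiv heq.symm
end

section
/- Let R = K[x,y] with K algebraically closed, and let f, g, h ∈ R be homogeneous with f, g parameters (i.e. (f,g) is (x,y)-primary). Let (a_1,a_2,a_3) and (b_1,b_2,b_3) be a homogeneous basis of the module of relations of (f,g,h), of total degrees e and e'. Then the ideal (a_3, b_3) ⊆ K[x,y] contains (f,g); in particular (a_3,b_3) is (x,y)-primary and a_3, b_3 have no common factor. -/
/-!
The Koszul relations `(-h, 0, f)` and `(0, -h, g)` are combinations of the basis, so their third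
components `f` and `g` lie in `(a₃, b₃)`. Hence `(x, y) ⊆ √(f, g) ⊆ √(a₃, b₃)`, and a common
divisor of `a₃, b₃` divides powers of the coprime elements `x` and `y`, so it is a unit.
-/

open MvPolynomial

theorem Ideal.span_pair_le_of_relations {R : Type*} [CommRing R] {f g h c d : R}
    (hrel : ∀ v₁ v₂ v₃ : R, f * v₁ + g * v₂ + h * v₃ = 0 → v₃ ∈ Ideal.span {c, d}) :
    Ideal.span {f, g} ≤ Ideal.span {c, d} := by
  rw [Ideal.span_le]
  rintro p (rfl | rfl)
  · exact hrel (-h) 0 p (by ring)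
  · exact hrel 0 (-h) p (by ring)

theorem IsRelPrime.of_span_pair_le_radical {R : Type*} [CommSemiring R] [DecompositionMonoid R] {x y a b : R}
    (hxy : IsRelPrime x y) (hle : Ideal.span {x, y} ≤ (Ideal.span {a, b}).radical) :
    IsRelPrime a b := by
  intro d hda hdb
  have hd : Ideal.span {a, b} ≤ Ideal.span {d} := by
    rw [Ideal.span_le]
    rintro p (rfl | rfl)
    · exact Ideal.mem_span_singleton.2 hda
    · exact Ideal.mem_span_singleton.2 hdb
  have hdvd_pow : ∀ z ∈ Ideal.span {x, y}, ∃ n : ℕ, d ∣ z ^ n := fun z hz => by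
    obtain ⟨n, hn⟩ := Ideal.radical_mono hd (hle hz)
    exact ⟨n, Ideal.mem_span_singleton.1 hn⟩
  obtain ⟨n, hn⟩ := hdvd_pow x (Ideal.subset_span (Set.mem_insert x _))
  obtain ⟨m, hm⟩ := hdvd_pow y (Ideal.subset_span (Set.mem_insert_of_mem x rfl))
  exact hxy.pow hn hm

theorem MvPolynomial.isRelPrime_X_X {σ R : Type*} [CommRing R] [IsDomain R] {i j : σ}
    (hij : i ≠ j) : IsRelPrime (X i : MvPolynomial σ R) (X j) :=
  X_prime.irreducible.isRelPrime_iff_not_dvd.2 (by simpa [X_dvd_X] using hij)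

theorem stmt19_general (K : Type*) [Field K]
    (f g h a1 a2 a3 b1 b2 b3 : MvPolynomial (Fin 2) K)
    -- `f, g` are parameters: `(f,g)` is `(x,y)`-primary
    (hparam : Ideal.span {(X 0 : MvPolynomial (Fin 2) K), X 1} ≤
      (Ideal.span {f, g}).radical)
    -- they generate all relations:
    (hgen : ∀ v1 v2 v3 : MvPolynomial (Fin 2) K, f * v1 + g * v2 + h * v3 = 0 →
      ∃ r s : MvPolynomial (Fin 2) K,
        v1 = r * a1 + s * b1 ∧ v2 = r * a2 + s * b2 ∧ v3 = r * a3 + s * b3) :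
    Ideal.span {f, g} ≤ Ideal.span {a3, b3} ∧
    Ideal.span {(X 0 : MvPolynomial (Fin 2) K), X 1} ≤ (Ideal.span {a3, b3}).radical ∧
    IsRelPrime a3 b3 := by
  have hfg : Ideal.span {f, g} ≤ Ideal.span {a3, b3} :=
    Ideal.span_pair_le_of_relations fun v₁ v₂ v₃ hv => by
      obtain ⟨r, s, -, -, hv₃⟩ := hgen v₁ v₂ v₃ hv
      exact Ideal.mem_span_pair.2 ⟨r, s, hv₃.symm⟩
  have hrad := hparam.trans (Ideal.radical_mono hfg)
  exact ⟨hfg, hrad, (isRelPrime_X_X (by decide)).of_span_pair_le_radical hrad⟩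

/-- Let `R = K[x,y]` (`K` algebraically closed), `f, g, h ∈ R` homogeneous with `f, g`
parameters (`(f,g)` is `(x,y)`-primary), and let `(a₁,a₂,a₃)`, `(b₁,b₂,b₃)` be a
homogeneous basis of the module of relations of `(f,g,h)`, of total degrees `e` and `e'`.
Then `(f,g) ⊆ (a₃,b₃)`; in particular `(a₃,b₃)` is `(x,y)`-primary and `a₃, b₃` have no
common factor. -/
theorem stmt19 (K : Type*) [Field K] [IsAlgClosed K]
    (f g h a1 a2 a3 b1 b2 b3 : MvPolynomial (Fin 2) K)
    (df dg dh e e' : ℕ)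
    (hfh : f.IsHomogeneous df) (hgh : g.IsHomogeneous dg) (hhh : h.IsHomogeneous dh)
    (ha1 : a1.IsHomogeneous (e - df)) (ha2 : a2.IsHomogeneous (e - dg))
    (ha3 : a3.IsHomogeneous (e - dh))
    (hb1 : b1.IsHomogeneous (e' - df)) (hb2 : b2.IsHomogeneous (e' - dg))
    (hb3 : b3.IsHomogeneous (e' - dh))
    -- `f, g` are parameters: `(f,g)` is `(x,y)`-primary
    (hparam : Ideal.span {(X 0 : MvPolynomial (Fin 2) K), X 1} ≤
      (Ideal.span {f, g}).radical)
    -- `(a₁,a₂,a₃)` and `(b₁,b₂,b₃)` are relations: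
    (hrela : f * a1 + g * a2 + h * a3 = 0)
    (hrelb : f * b1 + g * b2 + h * b3 = 0)
    -- they generate all relations:
    (hgen : ∀ v1 v2 v3 : MvPolynomial (Fin 2) K, f * v1 + g * v2 + h * v3 = 0 →
      ∃ r s : MvPolynomial (Fin 2) K,
        v1 = r * a1 + s * b1 ∧ v2 = r * a2 + s * b2 ∧ v3 = r * a3 + s * b3)
    -- and they are linearly independent over `R`:
    (hindep : ∀ r s : MvPolynomial (Fin 2) K,
      r * a1 + s * b1 = 0 → r * a2 + s * b2 = 0 → r * a3 + s * b3 = 0 → r = 0 ∧ s = 0) :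
    Ideal.span {f, g} ≤ Ideal.span {a3, b3} ∧
    Ideal.span {(X 0 : MvPolynomial (Fin 2) K), X 1} ≤ (Ideal.span {a3, b3}).radical ∧
    IsRelPrime a3 b3 :=
  stmt19_general K f g h a1 a2 a3 b1 b2 b3 hparam hgen
end
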